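/- arXiv:1507.07661 — 7 statements merged into one kernel-verified Lean document; each statement's English description precedes it below -/
import Mathlib

section
/- For every continuous map υ : [0, 2π] → ℝ³ and every ε > 0 there exists a smooth curve η = (a, b, c) : [0, 2π] → ℝ³ which is Legendrian for the standard contact structure, i.e. c'(t) = b(t)·a'(t) for all t ∈ [0, 2π], and satisfies sup_{t ∈ [0,2π]} |υ(t) − η(t)| ≤ ε (Euclidean norm on ℝ³). -/
/-!
Approximate the three components by polynomials `P, Q, R` and let `q = R' - Q P'` measure how far
`(P, Q, R)` is from being Legendrian. Take `a = P + (M/N) sin (N t)`, `b = Q + (2/M) q cos (N t)`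
and `c(t) = R(0) + ∫₀ᵗ b a'`, so that `(a, b, c)` is Legendrian. Then `a` and `b` are within
`M/N` and `O(1/M)` of `P` and `Q`, while `b a' = R' + (M Q + (2/M) q P') cos (N t) + q cos (2 N t)`:
the mean `1/2` of `cos²` cancels the defect `q`. An integration by parts shows that integrals of a
`C¹` function against `cos (ν t)` are `O(1/ν)` uniformly on `[0, T]`, so `c` is close to `R` once
`M` and then `N` are large.
-/

open Real Set Filter
open scoped ContDiff

theorem abs_integral_mul_cos_le {f : ℝ → ℝ} (hf : ContDiff ℝ 1 f) {ν t B B' : ℝ} (hν : 0 < ν)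
    (ht : 0 ≤ t) (hB : |f t| ≤ B) (hB' : ∀ s ∈ Icc 0 t, |deriv f s| ≤ B') :
    |∫ s in 0..t, f s * cos (ν * s)| ≤ (B + B' * t) / ν := by
  have hsin (s : ℝ) : HasDerivAt (fun s => sin (ν * s) / ν) (cos (ν * s)) s := by
    simpa [hν.ne'] using (((hasDerivAt_id s).const_mul ν).sin).div_const ν
  rw [intervalIntegral.integral_mul_deriv_eq_deriv_mul
    (fun s _ => (hf.differentiable one_ne_zero s).hasDerivAt) (fun s _ => hsin s)
    ((hf.continuous_deriv le_rfl).intervalIntegrable _ _)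
    ((by fun_prop : Continuous _).intervalIntegrable _ _)]
  have hboundary : |f t * (sin (ν * t) / ν)| ≤ B / ν := by
    rw [abs_mul, abs_div, abs_of_pos hν, mul_div_assoc']
    gcongr
    exact (mul_le_of_le_one_right (abs_nonneg _) (abs_sin_le_one _)).trans hB
  have hbulk : |∫ s in 0..t, deriv f s * (sin (ν * s) / ν)| ≤ B' / ν * t := by
    simpa [abs_of_nonneg ht] using intervalIntegral.norm_integral_le_of_norm_le_const
      (C := B' / ν) (a := 0) (b := t) (f := fun s => deriv f s * (sin (ν * s) / ν)) fun s hs => by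
        rw [uIoc_of_le ht] at hs
        have hs' := hB' s (Ioc_subset_Icc_self hs)
        rw [Real.norm_eq_abs, abs_mul, abs_div, abs_of_pos hν, mul_div_assoc']
        gcongr
        exact (mul_le_of_le_one_right (abs_nonneg _) (abs_sin_le_one _)).trans hs'
  calc _ ≤ |f t * (sin (ν * t) / ν)| + |∫ s in 0..t, deriv f s * (sin (ν * s) / ν)| := by
        simp only [mul_zero, sin_zero, zero_div, sub_zero]
        exact abs_sub _ _
    _ ≤ B / ν + B' / ν * t := add_le_add hboundary hbulk
    _ = (B + B' * t) / ν := by ring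

theorem exists_forall_abs_integral_mul_cos_le {f : ℝ → ℝ} (hf : ContDiff ℝ 1 f) (T : ℝ) :
    ∃ K, ∀ ν > 0, ∀ t ∈ Icc 0 T, |∫ s in 0..t, f s * cos (ν * s)| ≤ K / ν := by
  obtain ⟨B, hB⟩ := isCompact_Icc.exists_bound_of_continuousOn (s := Icc 0 T)
    hf.continuous.continuousOn
  obtain ⟨B', hB'⟩ := isCompact_Icc.exists_bound_of_continuousOn (s := Icc 0 T)
    (hf.continuous_deriv le_rfl).continuousOn
  refine ⟨B + B' * T, fun ν hν t ht => (abs_integral_mul_cos_le hf hν ht.1 (hB t ht)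
    fun s hs => hB' s ⟨hs.1, hs.2.trans ht.2⟩).trans ?_⟩
  have hB'0 : 0 ≤ B' := (norm_nonneg _).trans (hB' 0 ⟨le_rfl, ht.1.trans ht.2⟩)
  gcongr
  exact ht.2

noncomputable def legendrianLift (a b : ℝ → ℝ) (c₀ t : ℝ) : ℝ :=
  c₀ + ∫ s in 0..t, b s * deriv a s

section legendrianLift

variable {a b : ℝ → ℝ}

theorem hasDerivAt_legendrianLift (ha : ContDiff ℝ 1 a) (hb : Continuous b) (c₀ t : ℝ) :
    HasDerivAt (legendrianLift a b c₀) (b t * deriv a t) t :=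
  ((hb.mul (ha.continuous_deriv le_rfl)).integral_hasStrictDerivAt 0 t).hasDerivAt.const_add c₀

theorem deriv_legendrianLift (ha : ContDiff ℝ 1 a) (hb : Continuous b) (c₀ : ℝ) :
    deriv (legendrianLift a b c₀) = b * deriv a :=
  funext fun t => (hasDerivAt_legendrianLift ha hb c₀ t).deriv

theorem contDiff_legendrianLift (ha : ContDiff ℝ ∞ a) (hb : ContDiff ℝ ∞ b) (c₀ : ℝ) :
    ContDiff ℝ ∞ (legendrianLift a b c₀) := by
  have ha₁ : ContDiff ℝ 1 a := ha.of_le (by simp)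
  refine contDiff_infty_iff_deriv.2
    ⟨fun t => (hasDerivAt_legendrianLift ha₁ hb.continuous c₀ t).differentiableAt, ?_⟩
  rw [deriv_legendrianLift ha₁ hb.continuous]
  exact hb.mul (contDiff_infty_iff_deriv.1 ha).2

end legendrianLift

noncomputable def legendrianDefect (P Q R : ℝ → ℝ) (t : ℝ) : ℝ :=
  deriv R t - Q t * deriv P t

noncomputable def wiggleX (P : ℝ → ℝ) (M N t : ℝ) : ℝ :=
  P t + M / N * sin (N * t)

noncomputable def wiggleY (P Q R : ℝ → ℝ) (M N t : ℝ) : ℝ :=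
  Q t + 2 / M * (legendrianDefect P Q R t * cos (N * t))

section wiggle

variable {P Q R : ℝ → ℝ} {M N : ℝ}

theorem contDiff_legendrianDefect (hP : ContDiff ℝ ∞ P) (hQ : ContDiff ℝ ∞ Q)
    (hR : ContDiff ℝ ∞ R) : ContDiff ℝ ∞ (legendrianDefect P Q R) :=
  (contDiff_infty_iff_deriv.1 hR).2.sub (hQ.mul (contDiff_infty_iff_deriv.1 hP).2)

theorem contDiff_wiggleX (hP : ContDiff ℝ ∞ P) : ContDiff ℝ ∞ (wiggleX P M N) :=
  hP.add (contDiff_const.mul (contDiff_const.mul contDiff_id).sin)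

theorem contDiff_wiggleY (hP : ContDiff ℝ ∞ P) (hQ : ContDiff ℝ ∞ Q) (hR : ContDiff ℝ ∞ R) :
    ContDiff ℝ ∞ (wiggleY P Q R M N) :=
  hQ.add (contDiff_const.mul
    ((contDiff_legendrianDefect hP hQ hR).mul (contDiff_const.mul contDiff_id).cos))

theorem deriv_wiggleX (hP : Differentiable ℝ P) (hN : N ≠ 0) (t : ℝ) :
    deriv (wiggleX P M N) t = deriv P t + M * cos (N * t) := by
  have h : HasDerivAt (wiggleX P M N) (deriv P t + M / N * (cos (N * t) * (N * 1))) t :=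
    (hP t).hasDerivAt.add ((((hasDerivAt_id t).const_mul N).sin).const_mul (M / N))
  rw [h.deriv]
  field_simp

theorem wiggleY_mul_deriv_wiggleX (hP : Differentiable ℝ P) (hM : M ≠ 0) (hN : N ≠ 0) (t : ℝ) :
    wiggleY P Q R M N t * deriv (wiggleX P M N) t =
      deriv R t + (M * Q t + 2 / M * (legendrianDefect P Q R t * deriv P t)) * cos (N * t)
        + legendrianDefect P Q R t * cos (2 * N * t) := by
  rw [deriv_wiggleX hP hN, wiggleY, mul_assoc 2 N t, cos_two_mul]
  unfold legendrianDefect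
  field_simp
  ring

theorem legendrianLift_wiggle_sub (hP : ContDiff ℝ ∞ P) (hQ : ContDiff ℝ ∞ Q)
    (hR : ContDiff ℝ ∞ R) (hM : M ≠ 0) (hN : N ≠ 0) (t : ℝ) :
    legendrianLift (wiggleX P M N) (wiggleY P Q R M N) (R 0) t - R t =
      (∫ s in 0..t, (M * Q s + 2 / M * (legendrianDefect P Q R s * deriv P s)) * cos (N * s))
        + ∫ s in 0..t, legendrianDefect P Q R s * cos (2 * N * s) := by
  have hR' : ContDiff ℝ ∞ (deriv R) := (contDiff_infty_iff_deriv.1 hR).2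
  have hq := contDiff_legendrianDefect hP hQ hR
  have hFTC : ∫ s in 0..t, deriv R s = R t - R 0 :=
    intervalIntegral.integral_deriv_eq_sub (fun s _ => hR.differentiable (by simp) s)
      (hR'.continuous.intervalIntegrable _ _)
  have hsplit : ∫ s in 0..t, wiggleY P Q R M N s * deriv (wiggleX P M N) s =
      ∫ s in 0..t, (deriv R s + (M * Q s + 2 / M * (legendrianDefect P Q R s * deriv P s))
        * cos (N * s) + legendrianDefect P Q R s * cos (2 * N * s)) := by
    simp only [wiggleY_mul_deriv_wiggleX (hP.differentiable (by simp)) hM hN]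
  rw [legendrianLift, hsplit, intervalIntegral.integral_add, intervalIntegral.integral_add, hFTC]
  · ring
  all_goals
    apply Continuous.intervalIntegrable
    fun_prop

end wiggle

theorem exists_legendrian_near_of_contDiff {P Q R : ℝ → ℝ} (hP : ContDiff ℝ ∞ P)
    (hQ : ContDiff ℝ ∞ Q) (hR : ContDiff ℝ ∞ R) (T : ℝ) {δ : ℝ} (hδ : 0 < δ) :
    ∃ a b c : ℝ → ℝ, ContDiff ℝ ∞ a ∧ ContDiff ℝ ∞ b ∧ ContDiff ℝ ∞ c ∧
      (∀ t, deriv c t = b t * deriv a t) ∧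
      ∀ t ∈ Icc 0 T, |a t - P t| < δ ∧ |b t - Q t| < δ ∧ |c t - R t| < δ := by
  have h1 : (1 : WithTop ℕ∞) ≤ ∞ := by simp
  have hq := contDiff_legendrianDefect hP hQ hR
  obtain ⟨Cq, hCq⟩ := isCompact_Icc.exists_bound_of_continuousOn (s := Icc 0 T)
    hq.continuous.continuousOn
  obtain ⟨M, hM, hMδ⟩ : ∃ M : ℝ, 0 < M ∧ 2 * Cq / M < δ :=
    ((eventually_gt_atTop 0).and
      ((tendsto_const_nhds.div_atTop tendsto_id).eventually_lt_const hδ)).exists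
  have hg : ContDiff ℝ ∞ fun s => M * Q s + 2 / M * (legendrianDefect P Q R s * deriv P s) :=
    (contDiff_const.mul hQ).add (contDiff_const.mul (hq.mul (contDiff_infty_iff_deriv.1 hP).2))
  obtain ⟨K₁, hK₁⟩ := exists_forall_abs_integral_mul_cos_le (hg.of_le h1) T
  obtain ⟨K₂, hK₂⟩ := exists_forall_abs_integral_mul_cos_le (hq.of_le h1) T
  obtain ⟨N, hN, hNx, hNz⟩ : ∃ N : ℝ, 0 < N ∧ M / N < δ ∧ (K₁ + K₂ / 2) / N < δ :=
    ((eventually_gt_atTop 0).and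
      (((tendsto_const_nhds.div_atTop tendsto_id).eventually_lt_const hδ).and
        ((tendsto_const_nhds.div_atTop tendsto_id).eventually_lt_const hδ))).exists
  have ha := contDiff_wiggleX (M := M) (N := N) hP
  have hb := contDiff_wiggleY (M := M) (N := N) hP hQ hR
  refine ⟨wiggleX P M N, wiggleY P Q R M N,
    legendrianLift (wiggleX P M N) (wiggleY P Q R M N) (R 0), ha, hb,
    contDiff_legendrianLift ha hb _,
    fun t => congrFun (deriv_legendrianLift (ha.of_le h1) hb.continuous _) t,
    fun t ht => ⟨?_, ?_, ?_⟩⟩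
  · calc |wiggleX P M N t - P t| = M / N * |sin (N * t)| := by
          rw [wiggleX, add_sub_cancel_left, abs_mul, abs_of_pos (div_pos hM hN)]
      _ ≤ M / N := mul_le_of_le_one_right (div_pos hM hN).le (abs_sin_le_one _)
      _ < δ := hNx
  · calc |wiggleY P Q R M N t - Q t|
          = 2 / M * (|legendrianDefect P Q R t| * |cos (N * t)|) := by
          rw [wiggleY, add_sub_cancel_left, abs_mul, abs_mul, abs_of_pos (div_pos two_pos hM)]
      _ ≤ 2 / M * Cq := by
          gcongr
          exact (mul_le_of_le_one_right (abs_nonneg _) (abs_cos_le_one _)).trans (hCq t ht)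
      _ = 2 * Cq / M := by ring
      _ < δ := hMδ
  · rw [legendrianLift_wiggle_sub hP hQ hR hM.ne' hN.ne']
    calc _ ≤ K₁ / N + K₂ / (2 * N) :=
          (abs_add_le _ _).trans (add_le_add (hK₁ N hN t ht) (hK₂ (2 * N) (by positivity) t ht))
      _ = (K₁ + K₂ / 2) / N := by ring
      _ < δ := hNz

theorem sqrt_sq_add_sq_add_sq_le {u v w r : ℝ} (hu : |u| ≤ r) (hv : |v| ≤ r) (hw : |w| ≤ r) :
    √(u ^ 2 + v ^ 2 + w ^ 2) ≤ 2 * r := by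
  have hr : 0 ≤ r := (abs_nonneg u).trans hu
  have hsq {s : ℝ} (hs : |s| ≤ r) : s ^ 2 ≤ r ^ 2 := sq_le_sq' (abs_le.1 hs).1 (abs_le.1 hs).2
  rw [Real.sqrt_le_left (by positivity)]
  linarith [hsq hu, hsq hv, hsq hw, sq_nonneg r]

/-- Every continuous curve `υ = (x, y, z) : [0, 2π] → ℝ³` can be `C⁰`-approximated, within any
`ε > 0`, by a smooth Legendrian curve `η = (a, b, c)` for the standard contact structure on `ℝ³`
(i.e. `c' = b·a'`), the distance being measured in the Euclidean norm on `ℝ³`. -/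
theorem legendrian_approximation_of_continuous_curve
    (x y z : ℝ → ℝ)
    (hx : ContinuousOn x (Icc 0 (2 * π)))
    (hy : ContinuousOn y (Icc 0 (2 * π)))
    (hz : ContinuousOn z (Icc 0 (2 * π)))
    (ε : ℝ) (hε : 0 < ε) :
    ∃ a b c : ℝ → ℝ,
      ContDiff ℝ (⊤ : ℕ∞) a ∧ ContDiff ℝ (⊤ : ℕ∞) b ∧ ContDiff ℝ (⊤ : ℕ∞) c ∧
      (∀ t ∈ Icc (0 : ℝ) (2 * π), deriv c t = b t * deriv a t) ∧
      (∀ t ∈ Icc (0 : ℝ) (2 * π),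
        Real.sqrt ((x t - a t) ^ 2 + (y t - b t) ^ 2 + (z t - c t) ^ 2) ≤ ε) := by
  have hε4 : 0 < ε / 4 := by positivity
  obtain ⟨P, hP⟩ := exists_polynomial_near_of_continuousOn 0 (2 * π) x hx _ hε4
  obtain ⟨Q, hQ⟩ := exists_polynomial_near_of_continuousOn 0 (2 * π) y hy _ hε4
  obtain ⟨R, hR⟩ := exists_polynomial_near_of_continuousOn 0 (2 * π) z hz _ hε4
  have smooth (p : Polynomial ℝ) : ContDiff ℝ ∞ fun t => p.eval t := by
    simpa using p.contDiff_aeval (𝕜 := ℝ) ∞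
  obtain ⟨a, b, c, ha, hb, hc, hLeg, hnear⟩ :=
    exists_legendrian_near_of_contDiff (smooth P) (smooth Q) (smooth R) (2 * π) hε4
  refine ⟨a, b, c, ha, hb, hc, fun t _ => hLeg t, fun t ht => ?_⟩
  obtain ⟨hxa, hyb, hzc⟩ := hnear t ht
  have near (f g : ℝ → ℝ) (p : Polynomial ℝ) (hfp : |p.eval t - f t| < ε / 4)
      (hgp : |g t - p.eval t| < ε / 4) : |f t - g t| ≤ ε / 2 := by
    rw [abs_sub_comm] at hfp
    linarith [abs_sub_le (f t) (p.eval t) (g t), abs_sub_comm (p.eval t) (g t)]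
  calc _ ≤ 2 * (ε / 2) := sqrt_sq_add_sq_add_sq_le (near x a P (hP t ht) hxa)
        (near y b Q (hQ t ht) hyb) (near z c R (hR t ht) hzc)
    _ = ε := by ring
end

section
/- Let (x, y, z) : [0, 2π] → ℝ³ be smooth and ε > 0. Then there exists a smooth map γ = (γ₁, γ₂) : [0, 2π] × ℝ → ℝ², 2π-periodic in the second variable, such that for all t ∈ [0, 2π] and s ∈ ℝ one has |γ₂(t, s) − y(t)·γ₁(t, s)| ≤ ε·min(|γ₁(t, s)|, γ₁(t, s)²), and for all t ∈ [0, 2π]: (1/2π)·∫₀^{2π} γ₁(t, s) ds = x'(t) and (1/2π)·∫₀^{2π} γ₂(t, s) ds = z'(t). -/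
open Real Set

noncomputable def w0 (s : ℝ) : ℝ := expNegInvGlue (Real.cos s - 1/2)

lemma w0_contDiff : ContDiff ℝ (⊤ : ℕ∞) w0 :=
  expNegInvGlue.contDiff.comp (Real.contDiff_cos.sub contDiff_const)

lemma w0_nonneg (s : ℝ) : 0 ≤ w0 s := expNegInvGlue.nonneg _

lemma w0_le_one (s : ℝ) : w0 s ≤ 1 := by
  unfold w0 expNegInvGlue
  split
  · norm_num
  · rename_i h
    rw [Real.exp_le_one_iff]
    have h0 : 0 < Real.cos s - 1/2 := lt_of_not_ge h
    have h1 : 0 ≤ (Real.cos s - 1/2)⁻¹ := inv_nonneg.mpr h0.le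
    linarith

lemma w0_zero_of_le {s : ℝ} (h : Real.cos s ≤ 1/2) : w0 s = 0 :=
  expNegInvGlue.zero_of_nonpos (by linarith)

lemma w0_periodic (s : ℝ) : w0 (s + 2 * π) = w0 s := by
  unfold w0; rw [Real.cos_add_two_pi]

noncomputable def I0 : ℝ := ∫ s in (0:ℝ)..(2 * π), w0 s

lemma w0_integrable (a b : ℝ) : IntervalIntegrable w0 MeasureTheory.volume a b :=
  (w0_contDiff.continuous).intervalIntegrable a b

lemma I0_pos : 0 < I0 := by
  have hsplit : I0 = (∫ s in (0:ℝ)..(π/3), w0 s) + ∫ s in (π/3)..(2 * π), w0 s := by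
    rw [I0, ← intervalIntegral.integral_add_adjacent_intervals (w0_integrable 0 (π/3))
      (w0_integrable (π/3) (2 * π))]
  have h1 : 0 < ∫ s in (0:ℝ)..(π/3), w0 s := by
    apply intervalIntegral.intervalIntegral_pos_of_pos_on (w0_integrable 0 (π/3))
    · intro s hs
      apply expNegInvGlue.pos_of_pos
      have hπ : (0:ℝ) < π := Real.pi_pos
      have : Real.cos (π/3) < Real.cos s := by
        apply Real.strictAntiOn_cos ⟨hs.1.le, by linarith [hs.2, Real.pi_pos]⟩
          ⟨by positivity, by linarith⟩ hs.2
      rw [Real.cos_pi_div_three] at this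
      linarith
    · positivity
  have h2 : 0 ≤ ∫ s in (π/3)..(2 * π), w0 s := by
    apply intervalIntegral.integral_nonneg
    · linarith [Real.pi_pos]
    · intro u _; exact w0_nonneg u
  linarith [hsplit]

/-- For a smooth curve `(x, y, z) : [0, 2π] → ℝ³` and `ε > 0` there is a smooth family of loops
`γ = (γ₁, γ₂) : [0, 2π] × S¹ → ℝ²` (a map `2π`-periodic in the second variable) taking values in
the ample relation `R_{t,ε} = {(u,v) : |v − y(t)·u| ≤ ε·min(|u|, u²)}` and whose average over
`S¹` is the barycenter `(x'(t), z'(t))`. -/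
theorem exists_family_of_loops
    (x y z : ℝ → ℝ)
    (hx : ContDiff ℝ (⊤ : ℕ∞) x) (hy : ContDiff ℝ (⊤ : ℕ∞) y)
    (hz : ContDiff ℝ (⊤ : ℕ∞) z)
    (ε : ℝ) (hε : 0 < ε) :
    ∃ γ₁ γ₂ : ℝ → ℝ → ℝ,
      ContDiff ℝ (⊤ : ℕ∞) (Function.uncurry γ₁) ∧
      ContDiff ℝ (⊤ : ℕ∞) (Function.uncurry γ₂) ∧
      (∀ t s : ℝ, γ₁ t (s + 2 * π) = γ₁ t s) ∧
      (∀ t s : ℝ, γ₂ t (s + 2 * π) = γ₂ t s) ∧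
      (∀ t ∈ Icc (0 : ℝ) (2 * π), ∀ s : ℝ,
        |γ₂ t s - y t * γ₁ t s| ≤ ε * min |γ₁ t s| ((γ₁ t s) ^ 2)) ∧
      (∀ t ∈ Icc (0 : ℝ) (2 * π),
        (1 / (2 * π)) * ∫ s in (0 : ℝ)..(2 * π), γ₁ t s = deriv x t ∧
        (1 / (2 * π)) * ∫ s in (0 : ℝ)..(2 * π), γ₂ t s = deriv z t) := by
  have hπ : (0:ℝ) < π := Real.pi_pos
  -- the normalizing constant
  set c : ℝ := (2 * π) / I0 with hc
  have hc_pos : 0 < c := div_pos (by positivity) I0_pos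
  have hcI : c * I0 = 2 * π := div_mul_cancel₀ _ (ne_of_gt I0_pos)
  -- derivatives are smooth
  have hx' : ContDiff ℝ (⊤ : ℕ∞) (deriv x) := (contDiff_infty_iff_deriv.mp hx).2
  have hz' : ContDiff ℝ (⊤ : ℕ∞) (deriv z) := (contDiff_infty_iff_deriv.mp hz).2
  -- auxiliary smooth functions of t
  set d : ℝ → ℝ := fun t => deriv z t - y t * deriv x t with hd
  have hd_smooth : ContDiff ℝ (⊤ : ℕ∞) d := hz'.sub (hy.mul hx')
  set A : ℝ → ℝ := fun t => 2 * (2 + (deriv x t)^2 + (c/ε) * (1 + (d t)^2)) with hA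
  have hA_smooth : ContDiff ℝ (⊤ : ℕ∞) A := by
    apply ContDiff.mul contDiff_const
    exact ((contDiff_const.add (hx'.pow 2)).add
      (contDiff_const.mul (contDiff_const.add (hd_smooth.pow 2))))
  have hK : ∀ t, 0 ≤ (c/ε) * (1 + (d t)^2) := by
    intro t
    have h0 : 0 ≤ c/ε := div_nonneg hc_pos.le hε.le
    nlinarith [sq_nonneg (d t)]
  have hA_nonneg : ∀ t, 0 ≤ A t := by
    intro t
    show (0:ℝ) ≤ 2 * (2 + (deriv x t)^2 + (c/ε) * (1 + (d t)^2))
    nlinarith [sq_nonneg (deriv x t), hK t]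
  have hdt : ∀ t, d t = deriv z t - y t * deriv x t := fun _ => rfl
  have hAval : ∀ t, A t = 2 * (2 + (deriv x t)^2 + (c/ε) * (1 + (d t)^2)) :=
    fun _ => rfl
  clear_value A
  clear hA hd
  clear_value d c
  refine ⟨fun t s => deriv x t + A t * Real.cos s,
          fun t s => y t * (deriv x t + A t * Real.cos s) + d t * (c * w0 s),
          ?_, ?_, ?_, ?_, ?_, ?_⟩
  · -- smoothness of γ₁
    exact (ContDiff.comp hx' contDiff_fst).add
      ((hA_smooth.comp contDiff_fst).mul (Real.contDiff_cos.comp contDiff_snd))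
  · -- smoothness of γ₂
    exact ((hy.comp contDiff_fst).mul ((ContDiff.comp hx' contDiff_fst).add
      ((hA_smooth.comp contDiff_fst).mul (Real.contDiff_cos.comp contDiff_snd)))).add
      ((hd_smooth.comp contDiff_fst).mul
        (contDiff_const.mul (w0_contDiff.comp contDiff_snd)))
  · intro t s; simp only [Real.cos_add_two_pi]
  · intro t s; simp only [Real.cos_add_two_pi, w0_periodic]
  · -- the pointwise inequality
    intro t _ s
    beta_reduce
    set u : ℝ := deriv x t + A t * Real.cos s with hu
    clear_value u
    have key : |y t * u + d t * (c * w0 s) - y t * u| = |d t| * (c * w0 s) := by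
      rw [add_sub_cancel_left, abs_mul,
        abs_of_nonneg (mul_nonneg hc_pos.le (w0_nonneg s))]
    rw [key]
    rcases le_or_gt (Real.cos s) (1/2) with hcs | hcs
    · rw [w0_zero_of_le hcs]
      have h1 : (0:ℝ) ≤ min |u| (u^2) := le_min (abs_nonneg _) (sq_nonneg _)
      nlinarith
    · -- here cos s > 1/2, so u is big
      have hAc : A t / 2 ≤ A t * Real.cos s := by
        nlinarith [hA_nonneg t]
      have hu1 : 1 + (c/ε) * (1 + (d t)^2) ≤ u := by
        have hA2 : A t / 2 = 2 + (deriv x t)^2 + (c/ε) * (1 + (d t)^2) := by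
          rw [hAval t]; ring
        nlinarith [sq_nonneg (deriv x t + 1)]
      have hu_ge_one : 1 ≤ u := by linarith [hK t]
      have hmin : min |u| (u^2) = |u| := by
        rw [min_eq_left]
        rw [abs_of_nonneg (by linarith)]
        nlinarith
      rw [hmin, abs_of_nonneg (by linarith : (0:ℝ) ≤ u)]
      have h1 : |d t| * (c * w0 s) ≤ |d t| * c := by
        have h := mul_le_mul_of_nonneg_left (w0_le_one s)
          (mul_nonneg (abs_nonneg (d t)) hc_pos.le)
        calc |d t| * (c * w0 s) = |d t| * c * w0 s := by ring
          _ ≤ |d t| * c * 1 := h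
          _ = |d t| * c := by ring
      have h2 : |d t| * c ≤ c * (1 + (d t)^2) := by
        nlinarith [sq_abs (d t), abs_nonneg (d t), sq_nonneg (|d t| - 1)]
      have h3 : c * (1 + (d t)^2) ≤ ε * u := by
        have h4 := mul_le_mul_of_nonneg_left hu1 hε.le
        rw [mul_add, mul_one] at h4
        have h5 : ε * ((c/ε) * (1 + (d t)^2)) = c * (1 + (d t)^2) := by
          field_simp
        linarith
      linarith
  · -- the average conditions
    intro t _
    have hint_cos : ∫ s in (0:ℝ)..(2*π), Real.cos s = 0 := by
      rw [integral_cos]; simp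
    have hiA : IntervalIntegrable (fun s => A t * Real.cos s)
        MeasureTheory.volume 0 (2*π) :=
      (continuous_const.mul Real.continuous_cos).intervalIntegrable _ _
    have hint1 : ∫ s in (0:ℝ)..(2*π), (deriv x t + A t * Real.cos s)
        = 2 * π * deriv x t := by
      rw [intervalIntegral.integral_add intervalIntegrable_const hiA,
        intervalIntegral.integral_const, intervalIntegral.integral_const_mul, hint_cos,
        sub_zero, smul_eq_mul, mul_zero, add_zero]
    have h2π : (2:ℝ) * π ≠ 0 := by positivity
    constructor
    · rw [hint1]; field_simp
    · have hi1 : IntervalIntegrable (fun s => y t * (deriv x t + A t * Real.cos s))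
          MeasureTheory.volume 0 (2*π) :=
        (continuous_const.mul (continuous_const.add
          (continuous_const.mul Real.continuous_cos))).intervalIntegrable _ _
      have hi2 : IntervalIntegrable (fun s => d t * (c * w0 s))
          MeasureTheory.volume 0 (2*π) :=
        (continuous_const.mul
          (continuous_const.mul w0_contDiff.continuous)).intervalIntegrable _ _
      have hint2 : ∫ s in (0:ℝ)..(2*π),
          (y t * (deriv x t + A t * Real.cos s) + d t * (c * w0 s))
          = y t * (2 * π * deriv x t) + d t * (c * I0) := by
        rw [intervalIntegral.integral_add hi1 hi2,
          intervalIntegral.integral_const_mul, hint1,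
          intervalIntegral.integral_const_mul, intervalIntegral.integral_const_mul]
        rfl
      rw [hint2]
      have : y t * (2 * π * deriv x t) + d t * (c * I0) = 2 * π * deriv z t := by
        rw [hcI, hdt t]; ring
      rw [this]
      field_simp
end

section
/- Let (x, y, z) : [0, 2π] → ℝ³ be smooth and ε > 0. With γ₁(t, s) := r·cos s + x'(t) and γ₂(t, s) := γ₁(t, s)·( y(t) + (2·(z'(t) − y(t)·x'(t)) / (r² + 2·x'(t)²))·γ₁(t, s) ), there exists r₀ > 0 such that for all r ≥ r₀, all t ∈ [0, 2π] and all s ∈ ℝ: |γ₂(t, s) − y(t)·γ₁(t, s)| ≤ ε·min(|γ₁(t, s)|, γ₁(t, s)²). In particular r₀ can be chosen uniformly in t by compactness of [0, 2π]. -/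
open Real Set

/-- For `r` large enough (uniformly in `t`, by compactness of `[0, 2π]`), the explicit loops
`γ₁(t,s) = r·cos s + x'(t)`,
`γ₂(t,s) = γ₁(t,s)·(y(t) + (2(z'(t) − y(t)x'(t))/(r² + 2x'(t)²))·γ₁(t,s))` take values in the
relation `R_{t,ε} = {(u,v) : |v − y(t)·u| ≤ ε·min(|u|, u²)}`. -/
theorem explicit_loops_in_relation
    (x y z : ℝ → ℝ)
    (hx : ContDiff ℝ (⊤ : ℕ∞) x) (hy : ContDiff ℝ (⊤ : ℕ∞) y)
    (hz : ContDiff ℝ (⊤ : ℕ∞) z)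
    (ε : ℝ) (hε : 0 < ε) :
    ∃ r₀ : ℝ, 0 < r₀ ∧ ∀ r : ℝ, r₀ ≤ r → ∀ t ∈ Icc (0 : ℝ) (2 * π), ∀ s : ℝ,
      |(r * Real.cos s + deriv x t) *
          (y t + 2 * (deriv z t - y t * deriv x t) / (r ^ 2 + 2 * (deriv x t) ^ 2) *
            (r * Real.cos s + deriv x t))
        - y t * (r * Real.cos s + deriv x t)|
      ≤ ε * min |r * Real.cos s + deriv x t| ((r * Real.cos s + deriv x t) ^ 2) := by
  have hxc : Continuous (deriv x) := hx.continuous_deriv (by exact_mod_cast le_top)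
  have hzc : Continuous (deriv z) := hz.continuous_deriv (by exact_mod_cast le_top)
  obtain ⟨M₁, hM₁⟩ := (isCompact_Icc (a := (0:ℝ)) (b := 2*π)).exists_bound_of_continuousOn
    hxc.continuousOn
  obtain ⟨M₂, hM₂⟩ := (isCompact_Icc (a := (0:ℝ)) (b := 2*π)).exists_bound_of_continuousOn
    ((hzc.sub (hy.continuous.mul hxc)).continuousOn)
  set M : ℝ := max 1 (max M₁ M₂) with hM
  have hM1 : (1:ℝ) ≤ M := le_max_left _ _
  have hM0 : (0:ℝ) < M := lt_of_lt_of_le one_pos hM1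
  refine ⟨max 1 ((2*M + 2*M^2)/ε), lt_of_lt_of_le one_pos (le_max_left _ _), ?_⟩
  intro r hr t ht s
  have hr1 : (1:ℝ) ≤ r := le_trans (le_max_left _ _) hr
  have hr0 : (0:ℝ) < r := lt_of_lt_of_le one_pos hr1
  have hεr : 2*M + 2*M^2 ≤ ε * r := by
    have := le_trans (le_max_right 1 ((2*M + 2*M^2)/ε)) hr
    rw [div_le_iff₀ hε] at this; linarith
  have hx' : |deriv x t| ≤ M := by
    have := hM₁ t ht
    simp only [Real.norm_eq_abs] at this
    exact this.trans ((le_max_left M₁ M₂).trans (le_max_right 1 _))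
  have hz' : |deriv z t - y t * deriv x t| ≤ M := by
    have := hM₂ t ht
    simp only [Real.norm_eq_abs] at this
    exact this.trans ((le_max_right M₁ M₂).trans (le_max_right 1 _))
  set u : ℝ := r * Real.cos s + deriv x t with hu_def
  set c : ℝ := 2 * (deriv z t - y t * deriv x t) / (r ^ 2 + 2 * (deriv x t) ^ 2) with hc_def
  have key : u * (y t + c * u) - y t * u = c * u ^ 2 := by ring
  rw [key, abs_mul, abs_pow, sq_abs]
  have hden : (0:ℝ) < r ^ 2 + 2 * (deriv x t) ^ 2 := by nlinarith [sq_nonneg (deriv x t)]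
  have hc : |c| ≤ 2 * M / r ^ 2 := by
    rw [hc_def, abs_div, abs_of_pos hden]
    refine div_le_div₀ (by positivity) ?_ (by positivity) (by nlinarith [sq_nonneg (deriv x t)])
    rw [abs_mul, abs_two]
    nlinarith
  have hu : |u| ≤ (1 + M) * r := by
    calc |u| ≤ |r * Real.cos s| + |deriv x t| := abs_add_le _ _
    _ ≤ r * 1 + M := by
        have h1 : |r * Real.cos s| ≤ r * 1 := by
          rw [abs_mul, abs_of_pos hr0]
          exact mul_le_mul_of_nonneg_left (abs_cos_le_one s) hr0.le
        exact add_le_add h1 hx'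
    _ ≤ (1 + M) * r := by nlinarith
  rw [mul_min_of_nonneg _ _ hε.le]
  refine le_min ?_ ?_
  · -- |c| * u^2 ≤ ε * |u|
    have h : u ^ 2 ≤ ((1 + M) * r) * |u| := by
      calc u ^ 2 = |u| * |u| := by rw [← sq_abs]; ring
      _ ≤ ((1 + M) * r) * |u| := mul_le_mul_of_nonneg_right hu (abs_nonneg u)
    calc |c| * u ^ 2 ≤ (2 * M / r ^ 2) * (((1 + M) * r) * |u|) :=
          mul_le_mul hc h (sq_nonneg u) (by positivity)
    _ = (2 * M * (1 + M) / r) * |u| := by field_simp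
    _ ≤ ε * |u| := by
        refine mul_le_mul_of_nonneg_right ?_ (abs_nonneg u)
        rw [div_le_iff₀ hr0]
        nlinarith
  · -- |c| * u^2 ≤ ε * u^2
    refine mul_le_mul_of_nonneg_right ?_ (sq_nonneg u)
    calc |c| ≤ 2 * M / r ^ 2 := hc
    _ ≤ ε := by
        rw [div_le_iff₀ (by positivity)]
        nlinarith
end

section
/- For every a ∈ ℝ and every ε > 0, the set R := {(u, v) ∈ ℝ² : |v − a·u| ≤ ε·min(|u|, u²)} is ample: the interior of the convex hull of R is all of ℝ². -/
open Real Set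

/-- The relation `R_{a,ε} = {(u, v) ∈ ℝ² : |v − a·u| ≤ ε·min(|u|, u²)}` is ample: the interior of
its convex hull is all of `ℝ²`. -/
theorem relation_is_ample (a ε : ℝ) (hε : 0 < ε) :
    interior (convexHull ℝ {p : ℝ × ℝ | |p.2 - a * p.1| ≤ ε * min |p.1| (p.1 ^ 2)}) =
      Set.univ := by
  set S := {p : ℝ × ℝ | |p.2 - a * p.1| ≤ ε * min |p.1| (p.1 ^ 2)} with hS
  have hmem : ∀ c : ℝ, |c - a| = ε → ∀ t : ℝ, 1 ≤ |t| → (t, c * t) ∈ S := by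
    intro c hc t ht
    simp only [hS, Set.mem_setOf_eq]
    have h1 : |c * t - a * t| = ε * |t| := by
      rw [← sub_mul, abs_mul, hc]
    have h2 : min |t| (t ^ 2) = |t| := by
      apply min_eq_left
      calc |t| = |t| * 1 := (mul_one _).symm
      _ ≤ |t| * |t| := by nlinarith [abs_nonneg t]
      _ = t ^ 2 := by rw [← abs_mul, ← sq, abs_sq]
    rw [h1, h2]
  have hline : ∀ c : ℝ, |c - a| = ε → ∀ t : ℝ, (t, c * t) ∈ convexHull ℝ S := by
    intro c hc t
    set T : ℝ := max |t| 1 with hT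
    have hT1 : (1:ℝ) ≤ T := le_max_right _ _
    have hTpos : 0 < T := lt_of_lt_of_le one_pos hT1
    have htT : |t| ≤ T := le_max_left _ _
    have hp : ((T, c * T) : ℝ × ℝ) ∈ convexHull ℝ S :=
      subset_convexHull ℝ S (hmem c hc T (by rwa [abs_of_pos hTpos]))
    have hq : ((-T, c * -T) : ℝ × ℝ) ∈ convexHull ℝ S :=
      subset_convexHull ℝ S (hmem c hc (-T) (by rw [abs_neg, abs_of_pos hTpos]; exact hT1))
    have hconv := (convex_convexHull ℝ S)
    have hl : (t, c * t) ∈ segment ℝ ((T, c*T) : ℝ × ℝ) ((-T, c * -T) : ℝ × ℝ) := by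
      refine ⟨(T + t) / (2 * T), (T - t) / (2 * T), ?_, ?_, ?_, ?_⟩
      · apply div_nonneg _ (by linarith)
        have := neg_abs_le t; linarith
      · apply div_nonneg _ (by linarith)
        have := le_abs_self t; linarith
      · field_simp; ring
      · have h2T : (2 * T) ≠ 0 := by positivity
        simp only [Prod.smul_mk, smul_eq_mul, Prod.mk_add_mk, Prod.mk.injEq]
        constructor <;> field_simp <;> ring
    exact hconv.segment_subset hp hq hl
  have hall : convexHull ℝ S = Set.univ := by
    ext ⟨x, y⟩
    simp only [Set.mem_univ, iff_true]
    have h1 : ((x + (y - a*x)/ε, (a+ε) * (x + (y - a*x)/ε)) : ℝ × ℝ) ∈ convexHull ℝ S :=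
      hline (a+ε) (by rw [add_sub_cancel_left, abs_of_pos hε]) _
    have h2 : ((x - (y - a*x)/ε, (a-ε) * (x - (y - a*x)/ε)) : ℝ × ℝ) ∈ convexHull ℝ S :=
      hline (a-ε) (by rw [sub_sub_cancel_left, abs_neg, abs_of_pos hε]) _
    refine (convex_convexHull ℝ S).segment_subset h1 h2 ?_
    refine ⟨1/2, 1/2, by norm_num, by norm_num, by norm_num, ?_⟩
    have hε' : ε ≠ 0 := ne_of_gt hε
    simp only [Prod.smul_mk, smul_eq_mul, Prod.mk_add_mk, Prod.mk.injEq]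
    constructor <;> field_simp <;> ring
  rw [hall, interior_univ]
end

section
/- Let γ : ℝ × ℝ → ℝ² be continuously differentiable and 2π-periodic in its second variable, and let n ≥ 1 be a natural number. Then for every t ∈ [0, 2π]: |∫₀^{t} γ(u, n·u) du − ∫₀^{t} (1/2π)·∫₀^{2π} γ(u, v) dv du| ≤ (4π/n)·( π·sup_{(u,v) ∈ [0,2π]×ℝ} |∂ₜγ(u, v)| + sup_{(u,v) ∈ [0,2π]×ℝ} |γ(u, v)| ). In particular this quantity is bounded by (4π²/n)·‖γ‖_{C¹([0,2π]×S¹)}. -/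
open Real Set

open Function MeasureTheory intervalIntegral
open scoped NNReal

/-!
The plane is modelled by `ℂ`, whose norm is the Euclidean one. Let `T = 2π/n`. On a window
`[c, c + T]`, freezing the slow variable at `c` makes the fast oscillation integrate exactly:
`∫_c^{c+T} γ(c, nu) du = T · avg γ(c, ·)`. Unfreezing costs at most `∫_c^{c+T} M₁ (u - c) du` for
`γ(u, nu)` and as much for its average, so each window contributes at most `M₁ T²`. At most `n`
windows fit into `[0, t]`, giving `2π M₁ T`, and the remaining piece, of length less than `T`,
contributes at most `2 M₂ T`.
-/

noncomputable def periodAverage {E : Type*} [NormedAddCommGroup E] [NormedSpace ℝ E] (p : ℝ)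
    (f : ℝ → E) : E :=
  p⁻¹ • ∫ v in (0 : ℝ)..p, f v

section Average

variable {E F : Type*} [NormedAddCommGroup E] [NormedSpace ℝ E] [NormedAddCommGroup F]
  [NormedSpace ℝ F] {p : ℝ} {f g : ℝ → E}

lemma periodAverage_sub (hf : IntervalIntegrable f volume 0 p)
    (hg : IntervalIntegrable g volume 0 p) :
    periodAverage p (fun v => f v - g v) = periodAverage p f - periodAverage p g := by
  rw [periodAverage, integral_sub hf hg, smul_sub]
  rfl

lemma norm_periodAverage_le {M : ℝ} (hp : 0 < p) (h : ∀ v, ‖f v‖ ≤ M) :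
    ‖periodAverage p f‖ ≤ M := by
  have hint : ‖∫ v in (0 : ℝ)..p, f v‖ ≤ M * p := by
    simpa [abs_of_pos hp] using norm_integral_le_of_norm_le_const (a := 0) (b := p) fun v _ => h v
  rw [periodAverage, norm_smul, Real.norm_of_nonneg (inv_nonneg.2 hp.le)]
  calc p⁻¹ * ‖∫ v in (0 : ℝ)..p, f v‖ ≤ p⁻¹ * (M * p) := by gcongr
    _ = M := by field_simp

lemma ContinuousLinearMap.map_periodAverage [CompleteSpace E] [CompleteSpace F] (L : E →L[ℝ] F)
    (hf : IntervalIntegrable f volume 0 p) :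
    L (periodAverage p f) = periodAverage p (fun v => L (f v)) := by
  rw [periodAverage, periodAverage, L.map_smul, L.intervalIntegral_comp_comm hf]

lemma Function.Periodic.intervalIntegral_comp_mul {ω : ℝ} (hf : Periodic f p) (hp : p ≠ 0)
    (hω : ω ≠ 0) (c : ℝ) :
    ∫ u in c..c + p / ω, f (ω * u) = (p / ω) • periodAverage p f := by
  rw [integral_comp_mul_left _ hω, mul_add, mul_div_cancel₀ _ hω,
    hf.intervalIntegral_add_eq (ω * c) 0, zero_add, periodAverage, smul_smul]
  congr 1
  field_simp

end Average

section Windows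

variable {E : Type*} [NormedAddCommGroup E] [NormedSpace ℝ E]

lemma norm_integral_le_of_norm_le_mul_sub {f : ℝ → E} {c T M : ℝ} (hT : 0 ≤ T)
    (h : ∀ u ∈ Icc c (c + T), ‖f u‖ ≤ M * (u - c)) :
    ‖∫ u in c..c + T, f u‖ ≤ M * T ^ 2 / 2 := by
  have hMT : 0 ≤ M * T := by
    simpa using (norm_nonneg _).trans (h (c + T) ⟨by linarith, le_rfl⟩)
  have hval : ∫ u in c..c + T, M * (u - c) = M * T ^ 2 / 2 := by
    rw [intervalIntegral.integral_comp_sub_right (fun x => M * x), sub_self, add_sub_cancel_left,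
      intervalIntegral.integral_const_mul, integral_id]
    ring
  calc ‖∫ u in c..c + T, f u‖ ≤ |∫ u in c..c + T, M * (u - c)| := by
        refine norm_integral_le_abs_of_norm_le ?_
          ((by fun_prop : Continuous fun u => M * (u - c)).intervalIntegrable _ _)
        rw [uIoc_of_le (by linarith)]
        filter_upwards [ae_restrict_mem measurableSet_Ioc] with u hu
          using h u (Ioc_subset_Icc_self hu)
    _ = M * T ^ 2 / 2 := by
        rw [hval, abs_of_nonneg]
        nlinarith

lemma norm_integral_le_of_norm_integral_window_le {F : ℝ → E} {a b T C D : ℝ} (hab : a ≤ b)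
    (hT : 0 < T) (hC : 0 ≤ C) (hF : IntervalIntegrable F volume a b)
    (hwindow : ∀ c, a ≤ c → c + T ≤ b → ‖∫ u in c..c + T, F u‖ ≤ C)
    (hbound : ∀ u ∈ Icc a b, ‖F u‖ ≤ D) :
    ‖∫ u in a..b, F u‖ ≤ (b - a) / T * C + T * D := by
  set k := ⌊(b - a) / T⌋₊
  set x : ℕ → ℝ := fun j => a + j * T
  have hk : (k : ℝ) ≤ (b - a) / T := Nat.floor_le (div_nonneg (sub_nonneg.2 hab) hT.le)
  have hxk : x k ≤ b := by
    have := (le_div_iff₀ hT).1 hk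
    simp only [x]
    linarith
  have htail : b - x k ≤ T := by
    have := (div_lt_iff₀ hT).1 (Nat.lt_floor_add_one ((b - a) / T))
    simp only [x]
    linarith
  have hxmem : ∀ j ≤ k, x j ∈ Icc a b := fun j hj => by
    have : (j : ℝ) * T ≤ k * T := by gcongr
    exact ⟨le_add_of_nonneg_right (by positivity), by simp only [x] at hxk ⊢; linarith⟩
  have hint : ∀ {c d}, c ∈ Icc a b → d ∈ Icc a b → IntervalIntegrable F volume c d :=
    fun hc hd => hF.mono_set (uIcc_subset_uIcc (Icc_subset_uIcc hc) (Icc_subset_uIcc hd))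
  have hsucc : ∀ j, x (j + 1) = x j + T := fun j => by simp only [x]; push_cast; ring
  have hsplit : ∫ u in a..b, F u =
      (∑ j ∈ Finset.range k, ∫ u in x j..x (j + 1), F u) + ∫ u in x k..b, F u := by
    rw [sum_integral_adjacent_intervals fun j hj => hint (hxmem j hj.le) (hxmem (j + 1) hj),
      integral_add_adjacent_intervals (hint (hxmem 0 k.zero_le) (hxmem k le_rfl))
        (hint (hxmem k le_rfl) ⟨hab, le_rfl⟩)]
    simp [x]
  have hsum : ‖∑ j ∈ Finset.range k, ∫ u in x j..x (j + 1), F u‖ ≤ k * C := by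
    calc _ ≤ ∑ _j ∈ Finset.range k, C := norm_sum_le_of_le _ fun j hj => by
          have hj := Finset.mem_range.1 hj
          rw [hsucc]
          exact hwindow _ (hxmem j hj.le).1 (hsucc j ▸ (hxmem (j + 1) hj).2)
      _ = k * C := by simp
  have hrest : ‖∫ u in x k..b, F u‖ ≤ T * D := by
    have hD : 0 ≤ D := (norm_nonneg _).trans (hbound a ⟨le_rfl, hab⟩)
    refine (norm_integral_le_of_norm_le_const fun u hu => hbound u ?_).trans ?_
    · rw [uIoc_of_le hxk] at hu
      exact ⟨(hxmem k le_rfl).1.trans hu.1.le, hu.2⟩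
    · rw [abs_of_nonneg (sub_nonneg.2 hxk), mul_comm]
      gcongr
  calc ‖∫ u in a..b, F u‖ ≤ k * C + T * D :=
        hsplit ▸ (norm_add_le _ _).trans (add_le_add hsum hrest)
    _ ≤ (b - a) / T * C + T * D := by gcongr

end Windows

section Oscillation

variable {E : Type*} [NormedAddCommGroup E] [NormedSpace ℝ E] {Γ : ℝ → ℝ → E} {p ω : ℝ}
  {K : ℝ≥0}

lemma continuous_periodAverage (hΓ : Continuous (uncurry Γ)) :
    Continuous fun u => periodAverage p (Γ u) :=
  (continuous_parametric_intervalIntegral_of_continuous' hΓ 0 p).const_smul _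

lemma lipschitzOnWith_periodAverage {s : Set ℝ} (hp : 0 < p)
    (hΓ : ∀ u, IntervalIntegrable (Γ u) volume 0 p)
    (hlip : ∀ v, LipschitzOnWith K (fun u => Γ u v) s) :
    LipschitzOnWith K (fun u => periodAverage p (Γ u)) s := by
  refine LipschitzOnWith.of_dist_le_mul fun u hu u' hu' => ?_
  rw [dist_eq_norm, ← periodAverage_sub (hΓ u) (hΓ u')]
  exact norm_periodAverage_le hp fun v => by
    rw [← dist_eq_norm]
    exact (hlip v).dist_le_mul u hu u' hu'

variable [CompleteSpace E]

lemma norm_integral_sub_periodAverage_window_le {c : ℝ} (hΓ : Continuous (uncurry Γ))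
    (hper : ∀ u, Periodic (Γ u) p) (hp : 0 < p) (hω : 0 < ω)
    (hlip : ∀ v, LipschitzOnWith K (fun u => Γ u v) (Icc c (c + p / ω))) :
    ‖∫ u in c..c + p / ω, (Γ u (ω * u) - periodAverage p (Γ u))‖ ≤ K * (p / ω) ^ 2 := by
  set T := p / ω
  set A := fun u => periodAverage p (Γ u)
  have hA : Continuous A := continuous_periodAverage hΓ
  have hAlip : LipschitzOnWith K A (Icc c (c + T)) :=
    lipschitzOnWith_periodAverage hp (fun u => (hΓ.uncurry_left u).intervalIntegrable _ _) hlip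
  have hfreeze : ∫ u in c..c + T, Γ c (ω * u) = ∫ _ in c..c + T, A c := by
    rw [(hper c).intervalIntegral_comp_mul hp.ne' hω.ne', intervalIntegral.integral_const,
      add_sub_cancel_left]
  have hsplit : ∫ u in c..c + T, (Γ u (ω * u) - A u) =
      (∫ u in c..c + T, (Γ u (ω * u) - Γ c (ω * u))) - ∫ u in c..c + T, (A u - A c) := by
    have hΓω : Continuous fun u => Γ u (ω * u) := by fun_prop
    rw [integral_sub (hΓω.intervalIntegrable _ _) (hA.intervalIntegrable _ _),
      integral_sub (hΓω.intervalIntegrable _ _)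
        ((by fun_prop : Continuous fun u => Γ c (ω * u)).intervalIntegrable _ _),
      integral_sub (hA.intervalIntegrable _ _) intervalIntegrable_const, hfreeze]
    abel
  have hT : 0 ≤ T := div_nonneg hp.le hω.le
  have hc : c ∈ Icc c (c + T) := left_mem_Icc.2 (by linarith)
  have hdist : ∀ u ∈ Icc c (c + T), dist u c = u - c := fun u hu => by
    rw [Real.dist_eq, abs_of_nonneg (sub_nonneg.2 hu.1)]
  have hΓbound : ‖∫ u in c..c + T, (Γ u (ω * u) - Γ c (ω * u))‖ ≤ K * T ^ 2 / 2 :=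
    norm_integral_le_of_norm_le_mul_sub hT fun u hu => by
      rw [← dist_eq_norm, ← hdist u hu]
      exact (hlip (ω * u)).dist_le_mul u hu c hc
  have hAbound : ‖∫ u in c..c + T, (A u - A c)‖ ≤ K * T ^ 2 / 2 :=
    norm_integral_le_of_norm_le_mul_sub hT fun u hu => by
      rw [← dist_eq_norm, ← hdist u hu]
      exact hAlip.dist_le_mul u hu c hc
  rw [hsplit]
  calc _ ≤ K * T ^ 2 / 2 + K * T ^ 2 / 2 := (norm_sub_le _ _).trans (add_le_add hΓbound hAbound)
    _ = K * T ^ 2 := by ring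

theorem norm_integral_comp_mul_sub_integral_periodAverage_le {a b M : ℝ}
    (hΓ : Continuous (uncurry Γ)) (hper : ∀ u, Periodic (Γ u) p) (hp : 0 < p) (hω : 0 < ω)
    (hab : a ≤ b) (hlip : ∀ v, LipschitzOnWith K (fun u => Γ u v) (Icc a b))
    (hbound : ∀ u ∈ Icc a b, ∀ v, ‖Γ u v‖ ≤ M) :
    ‖(∫ u in a..b, Γ u (ω * u)) - ∫ u in a..b, periodAverage p (Γ u)‖ ≤
      p / ω * ((b - a) * K + 2 * M) := by
  have hΓω : Continuous fun u => Γ u (ω * u) := by fun_prop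
  have hA := continuous_periodAverage (p := p) hΓ
  rw [← integral_sub (hΓω.intervalIntegrable _ _) (hA.intervalIntegrable _ _)]
  refine (norm_integral_le_of_norm_integral_window_le (C := K * (p / ω) ^ 2) (D := 2 * M) hab
    (div_pos hp hω) (by positivity) ((hΓω.sub hA).intervalIntegrable _ _)
    (fun c hac hcb => ?_) (fun u hu => ?_)).trans_eq ?_
  · exact norm_integral_sub_periodAverage_window_le hΓ hper hp hω fun v =>
      (hlip v).mono (Icc_subset_Icc hac hcb)
  · rw [two_mul]
    exact (norm_sub_le _ _).trans
      (add_le_add (hbound u hu _) (norm_periodAverage_le hp (hbound u hu)))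
  · field_simp

theorem ContinuousLinearMap.map_integral_comp_mul_sub_integral_periodAverage {a b : ℝ}
    {F : Type*} [NormedAddCommGroup F] [NormedSpace ℝ F] [CompleteSpace F] (L : E →L[ℝ] F)
    (hΓ : Continuous (uncurry Γ)) :
    L ((∫ u in a..b, Γ u (ω * u)) - ∫ u in a..b, periodAverage p (Γ u)) =
      (∫ u in a..b, L (Γ u (ω * u))) - ∫ u in a..b, periodAverage p (fun v => L (Γ u v)) := by
  have hΓω : Continuous fun u => Γ u (ω * u) := by fun_prop
  simp_rw [map_sub, ← L.intervalIntegral_comp_comm (hΓω.intervalIntegrable _ _),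
    ← L.intervalIntegral_comp_comm ((continuous_periodAverage hΓ).intervalIntegrable _ _),
    L.map_periodAverage ((hΓ.uncurry_left _).intervalIntegrable _ _)]

end Oscillation

section Plane

open Complex

variable {γ₁ γ₂ : ℝ → ℝ → ℝ}

lemma hasDerivAt_deriv_of_contDiff_uncurry {f : ℝ → ℝ → ℝ} (hf : ContDiff ℝ 1 (uncurry f))
    (u v : ℝ) : HasDerivAt (fun w => f w v) (deriv (fun w => f w v) u) u :=
  ((hf.differentiable one_ne_zero).comp (differentiable_id.prodMk (differentiable_const v))
    u).hasDerivAt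

lemma lipschitzOnWith_ofReal_add_ofReal_mul_I (h1 : ContDiff ℝ 1 (uncurry γ₁))
    (h2 : ContDiff ℝ 1 (uncurry γ₂)) {s : Set ℝ} (hs : Convex ℝ s) {M : ℝ}
    (hM : ∀ u ∈ s, ∀ v, √(deriv (fun w => γ₁ w v) u ^ 2 + deriv (fun w => γ₂ w v) u ^ 2) ≤ M)
    (v : ℝ) : LipschitzOnWith M.toNNReal (fun u => (γ₁ u v : ℂ) + γ₂ u v * I) s :=
  hs.lipschitzOnWith_of_nnnorm_hasDerivWithin_le
    (fun u _ => ((hasDerivAt_deriv_of_contDiff_uncurry h1 u v).ofReal_comp.add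
      ((hasDerivAt_deriv_of_contDiff_uncurry h2 u v).ofReal_comp.mul_const I)).hasDerivWithinAt)
    (fun u hu => by
      rw [← norm_toNNReal, norm_add_mul_I]
      exact Real.toNNReal_le_toNNReal (hM u hu v))

lemma norm_integral_sub_integral_periodAverage_ofReal_add_ofReal_mul_I
    (h1 : Continuous (uncurry γ₁)) (h2 : Continuous (uncurry γ₂)) (p ω a b : ℝ) :
    ‖(∫ u in a..b, ((γ₁ u (ω * u) : ℂ) + γ₂ u (ω * u) * I)) -
        ∫ u in a..b, periodAverage p (fun v => (γ₁ u v : ℂ) + γ₂ u v * I)‖ =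
      √(((∫ u in a..b, γ₁ u (ω * u)) - ∫ u in a..b, periodAverage p (γ₁ u)) ^ 2 +
        ((∫ u in a..b, γ₂ u (ω * u)) - ∫ u in a..b, periodAverage p (γ₂ u)) ^ 2) := by
  have hΓ : Continuous (uncurry fun u v => (γ₁ u v : ℂ) + γ₂ u v * I) := by fun_prop
  rw [norm_eq_sqrt_sq_add_sq, ← reCLM_apply, ← imCLM_apply,
    reCLM.map_integral_comp_mul_sub_integral_periodAverage hΓ,
    imCLM.map_integral_comp_mul_sub_integral_periodAverage hΓ]
  simp

end Plane

/-- The fundamental estimate of convex integration: if `γ = (γ₁, γ₂) : ℝ × ℝ → ℝ²` is `C¹` and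
`2π`-periodic in its second variable, then for `n ≥ 1` and `t ∈ [0, 2π]`, the (Euclidean) distance
between `∫₀ᵗ γ(u, nu) du` and `∫₀ᵗ (1/2π) ∫₀^{2π} γ(u, v) dv du` is at most
`(4π/n)·(π·sup‖∂ₜγ‖ + sup‖γ‖)`, the suprema being taken over `[0, 2π] × ℝ`. -/
theorem convex_integration_estimate
    (γ₁ γ₂ : ℝ → ℝ → ℝ)
    (h1 : ContDiff ℝ 1 (Function.uncurry γ₁))
    (h2 : ContDiff ℝ 1 (Function.uncurry γ₂))
    (hper1 : ∀ u v : ℝ, γ₁ u (v + 2 * π) = γ₁ u v)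
    (hper2 : ∀ u v : ℝ, γ₂ u (v + 2 * π) = γ₂ u v)
    (n : ℕ) (hn : 1 ≤ n)
    (M₁ M₂ : ℝ)
    (hM₁ : ∀ u ∈ Icc (0 : ℝ) (2 * π), ∀ v : ℝ,
      Real.sqrt ((deriv (fun w => γ₁ w v) u) ^ 2 + (deriv (fun w => γ₂ w v) u) ^ 2) ≤ M₁)
    (hM₂ : ∀ u ∈ Icc (0 : ℝ) (2 * π), ∀ v : ℝ,
      Real.sqrt ((γ₁ u v) ^ 2 + (γ₂ u v) ^ 2) ≤ M₂) :
    ∀ t ∈ Icc (0 : ℝ) (2 * π),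
      Real.sqrt
          (((∫ u in (0 : ℝ)..t, γ₁ u (n * u)) -
              ∫ u in (0 : ℝ)..t, (1 / (2 * π)) * ∫ v in (0 : ℝ)..(2 * π), γ₁ u v) ^ 2 +
            ((∫ u in (0 : ℝ)..t, γ₂ u (n * u)) -
              ∫ u in (0 : ℝ)..t, (1 / (2 * π)) * ∫ v in (0 : ℝ)..(2 * π), γ₂ u v) ^ 2)
        ≤ 4 * π / n * (π * M₁ + M₂) := by
  intro t ht
  have hM₁0 : 0 ≤ M₁ := (sqrt_nonneg _).trans (hM₁ 0 ⟨le_rfl, by positivity⟩ 0)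
  have hsub : Icc 0 t ⊆ Icc 0 (2 * π) := Icc_subset_Icc_right ht.2
  have hΓ : Continuous (uncurry fun u v => (γ₁ u v : ℂ) + γ₂ u v * Complex.I) := by
    have := h1.continuous
    have := h2.continuous
    fun_prop
  have hper : ∀ u, Periodic (fun v => (γ₁ u v : ℂ) + γ₂ u v * Complex.I) (2 * π) :=
    fun u v => by simp only [hper1, hper2]
  have havg : ∀ (f : ℝ → ℝ → ℝ) u,
      1 / (2 * π) * ∫ v in (0 : ℝ)..2 * π, f u v = periodAverage (2 * π) (f u) := fun f u => by
    rw [periodAverage, one_div, smul_eq_mul]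
  simp_rw [havg, ← norm_integral_sub_integral_periodAverage_ofReal_add_ofReal_mul_I h1.continuous
    h2.continuous]
  refine (norm_integral_comp_mul_sub_integral_periodAverage_le hΓ hper two_pi_pos
    (Nat.cast_pos.2 hn) ht.1
    (fun v => (lipschitzOnWith_ofReal_add_ofReal_mul_I h1 h2 (convex_Icc 0 _) hM₁ v).mono hsub)
    (fun u hu v => (Complex.norm_add_mul_I _ _).trans_le (hM₂ u (hsub hu) v))).trans ?_
  rw [Real.coe_toNNReal _ hM₁0, sub_zero]
  calc 2 * π / n * (t * M₁ + 2 * M₂) ≤ 2 * π / n * (2 * π * M₁ + 2 * M₂) := by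
        gcongr
        exact ht.2
    _ = 4 * π / n * (π * M₁ + M₂) := by ring
end

section
/- Let y₀ ∈ ℝ, ε > 0, and (u₀, v₀) ∈ ℝ² with |v₀ − y₀·u₀| ≤ ε·|u₀|. For k a positive natural number define γ : [0, 1] → ℝ² by γ(s) := ( (1−s)^k·u₀ , (1−s)^k·( y₀·u₀ + (v₀ − y₀·u₀)·(1−s)^k ) ). Then: (i) γ(0) = (u₀, v₀) and γ(1) = (0, 0); (ii) for every k ≥ 1 and every s ∈ [0, 1], |γ₂(s) − y₀·γ₁(s)| ≤ ε·|γ₁(s)|, i.e. γ(s) lies in the cone C_ε; and (iii) for every δ' > 0 there exists k₀ such that for all k ≥ k₀, ∫₀¹ |γ(s)| ds < δ'. -/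
open Real Set

/-- The explicit connecting path
`γ(s) = ((1−s)^k·u₀, (1−s)^k·(y₀·u₀ + (v₀ − y₀·u₀)·(1−s)^k))` joins a vector `(u₀, v₀)` of the
cone `C_ε = {(u,v) : |v − y₀·u| ≤ ε·|u|}` to the origin inside `C_ε`, with
`∫₀¹ |γ(s)| ds` arbitrarily small as `k → ∞`. -/
theorem connecting_path
    (y₀ ε u₀ v₀ : ℝ) (hε : 0 < ε)
    (h : |v₀ - y₀ * u₀| ≤ ε * |u₀|)
    (γ₁ γ₂ : ℕ → ℝ → ℝ)
    (hγ₁ : ∀ (k : ℕ) (s : ℝ), γ₁ k s = (1 - s) ^ k * u₀)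
    (hγ₂ : ∀ (k : ℕ) (s : ℝ),
      γ₂ k s = (1 - s) ^ k * (y₀ * u₀ + (v₀ - y₀ * u₀) * (1 - s) ^ k)) :
    (∀ k : ℕ, 1 ≤ k →
      γ₁ k 0 = u₀ ∧ γ₂ k 0 = v₀ ∧ γ₁ k 1 = 0 ∧ γ₂ k 1 = 0) ∧
    (∀ k : ℕ, 1 ≤ k → ∀ s ∈ Icc (0 : ℝ) 1,
      |γ₂ k s - y₀ * γ₁ k s| ≤ ε * |γ₁ k s|) ∧
    (∀ δ' : ℝ, 0 < δ' → ∃ k₀ : ℕ, ∀ k : ℕ, k₀ ≤ k →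
      (∫ s in (0 : ℝ)..1, Real.sqrt ((γ₁ k s) ^ 2 + (γ₂ k s) ^ 2)) < δ') := by
  refine ⟨?_, ?_, ?_⟩
  · intro k hk
    refine ⟨by simp [hγ₁], by simp [hγ₂], ?_, ?_⟩
    · simp [hγ₁, zero_pow (by omega : k ≠ 0)]
    · simp [hγ₂, zero_pow (by omega : k ≠ 0)]
  · intro k hk s hs
    have h1 : (0:ℝ) ≤ 1 - s := by linarith [hs.2]
    have h2 : (1:ℝ) - s ≤ 1 := by linarith [hs.1]
    have hp : 0 ≤ (1-s)^k := pow_nonneg h1 k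
    have hp1 : (1-s)^k ≤ 1 := pow_le_one₀ h1 h2
    rw [hγ₁, hγ₂]
    have e : (1-s)^k * (y₀*u₀ + (v₀-y₀*u₀)*(1-s)^k) - y₀*((1-s)^k*u₀)
        = (1-s)^k * ((1-s)^k * (v₀ - y₀*u₀)) := by ring
    rw [e, abs_mul, abs_mul, abs_mul, abs_of_nonneg hp]
    calc (1-s)^k * ((1-s)^k * |v₀-y₀*u₀|)
        ≤ 1 * ((1-s)^k * |v₀-y₀*u₀|) :=
          mul_le_mul_of_nonneg_right hp1 (mul_nonneg hp (abs_nonneg _))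
      _ = (1-s)^k * |v₀-y₀*u₀| := one_mul _
      _ ≤ (1-s)^k * (ε * |u₀|) := mul_le_mul_of_nonneg_left h hp
      _ = ε * ((1-s)^k * |u₀|) := by ring
  · intro δ' hδ
    set C := |u₀| + (|y₀*u₀| + |v₀ - y₀*u₀|) with hC
    have hC0 : 0 ≤ C := by positivity
    obtain ⟨k₀, hk₀⟩ := exists_nat_gt (C / δ')
    refine ⟨k₀, fun k hk => ?_⟩
    have e1 : γ₁ k = fun s : ℝ => (1 - s) ^ k * u₀ := funext (hγ₁ k)
    have e2 : γ₂ k = fun s : ℝ => (1 - s) ^ k * (y₀ * u₀ + (v₀ - y₀ * u₀) * (1 - s) ^ k) :=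
      funext (hγ₂ k)
    have key : (∫ s in (0:ℝ)..1, Real.sqrt ((γ₁ k s)^2 + (γ₂ k s)^2))
        ≤ ∫ s in (0:ℝ)..1, C * (1-s)^k := by
      apply intervalIntegral.integral_mono_on zero_le_one
      · apply Continuous.intervalIntegrable
        rw [e1, e2]
        fun_prop
      · apply Continuous.intervalIntegrable
        fun_prop
      · intro s hs
        have h1 : (0:ℝ) ≤ 1 - s := by linarith [hs.2]
        have h2 : (1:ℝ) - s ≤ 1 := by linarith [hs.1]
        have hp : 0 ≤ (1-s)^k := pow_nonneg h1 k
        have hp1 : (1-s)^k ≤ 1 := pow_le_one₀ h1 h2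
        rw [hγ₁, hγ₂]
        have hsq : Real.sqrt (((1-s)^k*u₀)^2
            + ((1-s)^k * (y₀*u₀ + (v₀-y₀*u₀)*(1-s)^k))^2)
            ≤ |(1-s)^k*u₀| + |(1-s)^k * (y₀*u₀ + (v₀-y₀*u₀)*(1-s)^k)| := by
          rw [show |(1-s)^k*u₀| + |(1-s)^k * (y₀*u₀ + (v₀-y₀*u₀)*(1-s)^k)|
              = Real.sqrt ((|(1-s)^k*u₀| + |(1-s)^k * (y₀*u₀ + (v₀-y₀*u₀)*(1-s)^k)|)^2)
            from (Real.sqrt_sq (by positivity)).symm]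
          apply Real.sqrt_le_sqrt
          nlinarith [abs_nonneg ((1-s)^k*u₀),
            abs_nonneg ((1-s)^k * (y₀*u₀ + (v₀-y₀*u₀)*(1-s)^k)),
            sq_abs ((1-s)^k*u₀), sq_abs ((1-s)^k * (y₀*u₀ + (v₀-y₀*u₀)*(1-s)^k)),
            mul_nonneg (abs_nonneg ((1-s)^k*u₀))
              (abs_nonneg ((1-s)^k * (y₀*u₀ + (v₀-y₀*u₀)*(1-s)^k)))]
        refine hsq.trans ?_
        have hb : |(1-s)^k * (y₀*u₀ + (v₀-y₀*u₀)*(1-s)^k)|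
            ≤ (1-s)^k * (|y₀*u₀| + |v₀-y₀*u₀|) := by
          rw [abs_mul, abs_of_nonneg hp]
          apply mul_le_mul_of_nonneg_left _ hp
          calc |y₀*u₀ + (v₀-y₀*u₀)*(1-s)^k| ≤ |y₀*u₀| + |(v₀-y₀*u₀)*(1-s)^k| := abs_add_le _ _
            _ = |y₀*u₀| + |v₀-y₀*u₀| * (1-s)^k := by
                rw [abs_mul (v₀-y₀*u₀) ((1-s)^k), abs_of_nonneg hp]
            _ ≤ |y₀*u₀| + |v₀-y₀*u₀| * 1 := by gcongr
            _ = |y₀*u₀| + |v₀-y₀*u₀| := by ring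
        have ha : |(1-s)^k*u₀| = (1-s)^k * |u₀| := by
          rw [abs_mul, abs_of_nonneg hp]
        rw [ha]
        calc (1-s)^k * |u₀| + |(1-s)^k * (y₀*u₀ + (v₀-y₀*u₀)*(1-s)^k)|
            ≤ (1-s)^k * |u₀| + (1-s)^k * (|y₀*u₀| + |v₀-y₀*u₀|) := by linarith
          _ = C * (1-s)^k := by rw [hC]; ring
    have hint : (∫ s in (0:ℝ)..1, C * (1-s)^k) = C / (k+1) := by
      rw [intervalIntegral.integral_const_mul]
      have : (∫ s in (0:ℝ)..1, (1-s)^k) = ∫ x in (0:ℝ)..1, x^k := by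
        have := intervalIntegral.integral_comp_sub_left (a := (0:ℝ)) (b := 1)
          (fun x : ℝ => x ^ k) 1
        simpa using this
      rw [this, integral_pow]
      push_cast
      ring
    have hk1 : C / δ' < (k:ℝ) + 1 := by
      have : (k₀:ℝ) ≤ k := Nat.cast_le.mpr hk
      linarith
    have hfin : C / ((k:ℝ)+1) < δ' := by
      rw [div_lt_iff₀ (by positivity)]
      rw [div_lt_iff₀ hδ] at hk1
      nlinarith
    calc (∫ s in (0:ℝ)..1, Real.sqrt ((γ₁ k s)^2 + (γ₂ k s)^2))
        ≤ C / (k+1) := by rw [← hint]; exact key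
      _ < δ' := hfin
end

section
/- Define a(t) := t + (3/20)·sin(200·t), b(t) := (455/451)·cos(5·t) + (120/451)·cos(5·t)·cos(200·t), and c(t) := sin(5·t) + (459/5863)·sin(195·t) + (1377/18491)·sin(205·t) + (180/35629)·sin(395·t) + (20/4059)·sin(405·t). Then c'(t) = b(t)·a'(t) for all t ∈ ℝ; that is, the curve (a, b, c) is a smooth Legendrian curve for the standard contact structure on ℝ³. -/
/-!
Since `a' = 1 + 30 cos (200 t)`, the product `b · a'` is a trigonometric polynomial; with
`cos² y = (1 + cos 2y) / 2` and the product-to-sum formula it becomes a combination of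
`cos (k t)` for `k = 5, 195, 205, 395, 405`, and `c` is exactly its termwise antiderivative.
-/

open Real

theorem hasDerivAt_sin_const_mul (k t : ℝ) :
    HasDerivAt (fun t => sin (k * t)) (k * cos (k * t)) t := by
  simpa [mul_comm] using ((hasDerivAt_id t).const_mul k).sin

theorem hasDerivAt_helix_a (t : ℝ) :
    HasDerivAt (fun t => t + 3 / 20 * sin (200 * t)) (1 + 30 * cos (200 * t)) t := by
  refine (hasDerivAt_id' t).add ((hasDerivAt_sin_const_mul 200 t).const_mul (3 / 20))
    |>.congr_deriv ?_
  ring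

theorem hasDerivAt_helix_c (t : ℝ) :
    HasDerivAt (fun t => sin (5 * t) + 459 / 5863 * sin (195 * t) +
        1377 / 18491 * sin (205 * t) + 180 / 35629 * sin (395 * t) + 20 / 4059 * sin (405 * t))
      (5 * cos (5 * t) + 6885 / 451 * (cos (195 * t) + cos (205 * t)) +
        900 / 451 * (cos (395 * t) + cos (405 * t))) t := by
  refine ((((hasDerivAt_sin_const_mul 5 t).add
    ((hasDerivAt_sin_const_mul 195 t).const_mul (459 / 5863))).add
    ((hasDerivAt_sin_const_mul 205 t).const_mul (1377 / 18491))).add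
    ((hasDerivAt_sin_const_mul 395 t).const_mul (180 / 35629))).add
    ((hasDerivAt_sin_const_mul 405 t).const_mul (20 / 4059)) |>.congr_deriv ?_
  ring

theorem helix_b_mul_deriv_a (t : ℝ) :
    (455 / 451 * cos (5 * t) + 120 / 451 * cos (5 * t) * cos (200 * t)) *
        (1 + 30 * cos (200 * t)) =
      5 * cos (5 * t) + 6885 / 451 * (cos (195 * t) + cos (205 * t)) +
        900 / 451 * (cos (395 * t) + cos (405 * t)) := by
  have h200 := two_mul_cos_mul_cos (200 * t) (5 * t)
  have h400 := two_mul_cos_mul_cos (2 * (200 * t)) (5 * t)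
  have hsq := cos_sq (200 * t)
  ring_nf at h200 h400 hsq ⊢
  linear_combination 6885 / 451 * h200 + 3600 / 451 * cos (t * 5) * hsq + 900 / 451 * h400

/-- The explicit Legendrian approximation of the helix `t ↦ (t, cos(5t), sin(5t))`:
the curve `(a, b, c)` below is a smooth Legendrian curve for the standard contact structure on
`ℝ³`, i.e. `c'(t) = b(t)·a'(t)` for all `t`. -/
theorem legendrian_helix
    (a b c : ℝ → ℝ)
    (ha : ∀ t : ℝ, a t = t + 3 / 20 * Real.sin (200 * t))
    (hb : ∀ t : ℝ, b t = 455 / 451 * Real.cos (5 * t) +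
      120 / 451 * Real.cos (5 * t) * Real.cos (200 * t))
    (hc : ∀ t : ℝ, c t = Real.sin (5 * t) + 459 / 5863 * Real.sin (195 * t) +
      1377 / 18491 * Real.sin (205 * t) + 180 / 35629 * Real.sin (395 * t) +
      20 / 4059 * Real.sin (405 * t)) :
    ContDiff ℝ (⊤ : ℕ∞) a ∧ ContDiff ℝ (⊤ : ℕ∞) b ∧ ContDiff ℝ (⊤ : ℕ∞) c ∧
    ∀ t : ℝ, deriv c t = b t * deriv a t := by
  obtain rfl := funext ha
  obtain rfl := funext hb
  obtain rfl := funext hc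
  refine ⟨by fun_prop, by fun_prop, by fun_prop, fun t => ?_⟩
  rw [(hasDerivAt_helix_c t).deriv, (hasDerivAt_helix_a t).deriv, helix_b_mul_deriv_a]
end
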